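/- Let k ≥ 1. There exists an unextendible product basis in C^2 ⊗ C^2 ⊗ C^{4k+1} of size 4k + 4. -/

import Mathlib

open scoped Classical

/-- The product (tensor) vector in `ℂ^{d₁} ⊗ ⋯ ⊗ ℂ^{d_p}`, realized as
`EuclideanSpace ℂ (Π j, Fin (d j))`, built from local vectors `f j`. -/
noncomputable def prodVec {p : ℕ} {d : Fin p → ℕ}
    (f : ∀ j, EuclideanSpace ℂ (Fin (d j))) :
    EuclideanSpace ℂ (∀ j, Fin (d j)) :=
  WithLp.toLp 2 (fun x => ∏ j, f j (x j))

/-- A product state: a nonzero vector of the form `v₁ ⊗ ⋯ ⊗ v_p`. -/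
def IsProductState {p : ℕ} {d : Fin p → ℕ}
    (v : EuclideanSpace ℂ (∀ j, Fin (d j))) : Prop :=
  v ≠ 0 ∧ ∃ f : ∀ j, EuclideanSpace ℂ (Fin (d j)), v = prodVec f

/-- An unextendible product basis: a finite set of mutually orthogonal product
states such that every product state orthogonal to all of them is zero
(equivalently, no product state is orthogonal to all of them). -/
def IsUPB {p : ℕ} {d : Fin p → ℕ}
    (S : Finset (EuclideanSpace ℂ (∀ j, Fin (d j)))) : Prop :=
  (∀ v ∈ S, IsProductState v) ∧
  (∀ v ∈ S, ∀ w ∈ S, v ≠ w → (inner ℂ v w : ℂ) = 0) ∧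
  ∀ z : EuclideanSpace ℂ (∀ j, Fin (d j)),
    IsProductState z → ¬ (∀ v ∈ S, (inner ℂ v z : ℂ) = 0)

/-!
The states are indexed by the vertices `0, …, 4k+3` of a cycle with the two chords `{0, 2k+2}`
and `{1, 2k+3}`. Adjacent vertices are made orthogonal on one of the two qubits, all other pairs
on `ℂ^{4k+1}`. The qubit states are `(1, s)` and `(s, -1)` with `s ∈ ℕ`: distinct ones are
linearly independent, and `(1, s) ⊥ (s, -1)`. So a nonzero qubit vector is orthogonal to at most
one first-qubit state, and the vertices whose second-qubit state it is orthogonal to form a single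
vertex or lie in one of the pairs `{0, 2k+1}`, `{1, 2k+4}`, `{2, 2k+3}`, `{2k+2, 4k+3}` sharing a
state.

It remains to show that the third-party vectors of the remaining states span `ℂ^{4k+1}`.
Write `z₁, …, z_{4k+1}` for the coordinates and set `z₀ = z_{4k+2} = 0`. The vector of vertex
`l ≥ 2` then imposes `z_{l-2} = z_{l-1}`, so these vectors form a cycle through the "ground"
`z₀ = z_{4k+2}`. The vectors of vertices `1` and `0` impose that the sums over `[1, 2k+1]` and
`[2k+1, 4k+1]` vanish. For each removal set above, the surviving links cut the cycle into arcs.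
`z` vanishes on the arc through the ground and is constant on the others, and the surviving sums,
whose coefficients are positive, kill those constants one at a time.
-/

open Finset

lemma inner_prodVec {p : ℕ} {d : Fin p → ℕ} (f g : ∀ j, EuclideanSpace ℂ (Fin (d j))) :
    inner ℂ (prodVec f) (prodVec g) = ∏ j, inner ℂ (f j) (g j) := by
  simp only [PiLp.inner_apply, RCLike.inner_apply, prodVec, prod_univ_sum,
    Fintype.piFinset_univ]
  exact sum_congr rfl fun x _ => by rw [map_prod, ← prod_mul_distrib]

lemma prodVec_eq_zero_iff {p : ℕ} {d : Fin p → ℕ} {f : ∀ j, EuclideanSpace ℂ (Fin (d j))} :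
    prodVec f = 0 ↔ ∃ j, f j = 0 := by
  rw [← inner_self_eq_zero (𝕜 := ℂ), inner_prodVec, prod_eq_zero_iff]
  simp only [mem_univ, true_and, inner_self_eq_zero]

lemma isUPB_image_prodVec {p : ℕ} {d : Fin p → ℕ} {ι : Type*} [Fintype ι]
    (f : ι → ∀ j, EuclideanSpace ℂ (Fin (d j))) (hne : ∀ i j, f i j ≠ 0)
    (horth : Pairwise fun i j => inner ℂ (prodVec (f i)) (prodVec (f j)) = 0)
    (hunext : ∀ g : ∀ j, EuclideanSpace ℂ (Fin (d j)), (∀ j, g j ≠ 0) →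
      ∃ i, inner ℂ (prodVec (f i)) (prodVec g) ≠ 0) :
    IsUPB (univ.image fun i => prodVec (f i)) ∧
      (univ.image fun i => prodVec (f i)).card = Fintype.card ι := by
  have hne' : ∀ i, prodVec (f i) ≠ 0 := fun i h =>
    let ⟨j, hj⟩ := prodVec_eq_zero_iff.1 h
    hne i j hj
  have hinj := (linearIndependent_of_ne_zero_of_inner_eq_zero (𝕜 := ℂ) hne' horth).injective
  refine ⟨⟨?_, ?_, ?_⟩, card_image_of_injective _ hinj⟩
  · rintro v hv
    obtain ⟨i, -, rfl⟩ := mem_image.1 hv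
    exact ⟨hne' i, f i, rfl⟩
  · rintro v hv w hw hvw
    obtain ⟨i, -, rfl⟩ := mem_image.1 hv
    obtain ⟨j, -, rfl⟩ := mem_image.1 hw
    exact horth fun hij => hvw (hij ▸ rfl)
  · rintro z ⟨hz, g, rfl⟩ hall
    obtain ⟨i, hi⟩ := hunext g fun j hj => hz (prodVec_eq_zero_iff.2 ⟨j, hj⟩)
    exact hi (hall _ (mem_image_of_mem _ (mem_univ i)))

lemma mul_eq_mul_of_inner_eq_zero {u v a : EuclideanSpace ℂ (Fin 2)} (ha : a ≠ 0)
    (hu : inner ℂ u a = 0) (hv : inner ℂ v a = 0) : u 0 * v 1 = u 1 * v 0 := by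
  simp only [PiLp.inner_apply, RCLike.inner_apply, Fin.sum_univ_two] at hu hv
  by_contra hdet
  have hdet' : starRingEnd ℂ (u 0 * v 1 - u 1 * v 0) ≠ 0 := by
    rwa [map_ne_zero, sub_ne_zero]
  refine ha (PiLp.ext (Fin.forall_fin_two.2 ⟨?_, ?_⟩))
  · refine (mul_eq_zero.1 ?_).resolve_left hdet'
    simp only [map_sub, map_mul]
    linear_combination starRingEnd ℂ (v 1) * hu - starRingEnd ℂ (u 1) * hv
  · refine (mul_eq_zero.1 ?_).resolve_left hdet'
    simp only [map_sub, map_mul]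
    linear_combination starRingEnd ℂ (u 0) * hv - starRingEnd ℂ (v 0) * hu

noncomputable def qubit : Bool × ℕ → EuclideanSpace ℂ (Fin 2)
  | (true, s) => !₂[1, s]
  | (false, s) => !₂[s, -1]

lemma inner_qubit_flip (p : Bool × ℕ) : inner ℂ (qubit p) (qubit (!p.1, p.2)) = 0 := by
  rcases p with ⟨_ | _, s⟩ <;> simp [qubit, PiLp.inner_apply, Fin.sum_univ_two]

lemma qubit_ne_zero (p : Bool × ℕ) : qubit p ≠ 0 := by
  intro h
  rcases p with ⟨_ | _, s⟩
  · simpa [qubit] using congrArg (· 1) h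
  · simpa [qubit] using congrArg (· 0) h

lemma eq_of_inner_qubit_eq_zero {a : EuclideanSpace ℂ (Fin 2)} (ha : a ≠ 0) {p p' : Bool × ℕ}
    (h : inner ℂ (qubit p) a = 0) (h' : inner ℂ (qubit p') a = 0) : p = p' := by
  have hdet := mul_eq_mul_of_inner_eq_zero ha h h'
  have hne (s s' : ℕ) : (s * s' : ℂ) ≠ -1 := fun h =>
    Nat.cast_add_one_ne_zero (R := ℂ) (s * s') (by push_cast; rw [h]; ring)
  rcases p with ⟨_ | _, s⟩ <;> rcases p' with ⟨_ | _, s'⟩ <;>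
    simp only [qubit, Matrix.cons_val_zero, Matrix.cons_val_one, Matrix.cons_val_fin_one, mul_neg,
      mul_one, neg_mul, one_mul, neg_inj, Nat.cast_inj, Prod.mk.injEq, true_and, false_and,
      Bool.false_eq_true, Bool.true_eq_false] at hdet ⊢
  · exact hdet
  · exact hne s s' hdet
  · exact hne s s' hdet.symm
  · exact hdet.symm

lemma exists_forall_eq_of_inner_qubit_eq_zero {ι : Type*} [Nonempty ι] {label : ι → Bool × ℕ}
    (hinj : Function.Injective label) {a : EuclideanSpace ℂ (Fin 2)} (ha : a ≠ 0) :
    ∃ i, ∀ l, inner ℂ (qubit (label l)) a = 0 → l = i := by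
  by_cases h : ∃ i, inner ℂ (qubit (label i)) a = 0
  · obtain ⟨i, hi⟩ := h
    exact ⟨i, fun l hl => hinj (eq_of_inner_qubit_eq_zero ha hl hi)⟩
  · exact ⟨Classical.arbitrary ι, fun l hl => absurd ⟨l, hl⟩ h⟩

lemma eq_zero_of_sum_eq_zero_of_eq_ite {ι K : Type*} [Field K] [CharZero K] {f : ι → K}
    {I : Finset ι} {p : ι → Prop} [DecidablePred p] {c : K}
    (hf : ∀ s ∈ I, f s = if p s then c else 0) (hsum : ∑ s ∈ I, f s = 0)
    (hp : ∃ s ∈ I, p s) : c = 0 := by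
  obtain ⟨s, hsI, hps⟩ := hp
  rw [sum_congr rfl hf, sum_ite, sum_const_zero, add_zero, sum_const, nsmul_eq_mul] at hsum
  have hcard : ((I.filter p).card : K) ≠ 0 :=
    Nat.cast_ne_zero.2 (card_ne_zero.2 ⟨s, mem_filter.2 ⟨hsI, hps⟩⟩)
  exact (mul_eq_zero.1 hsum).resolve_left hcard

section Links

variable {z : ℕ → ℂ} {N : ℕ}

lemma eq_of_forall_links {a b : ℕ} (hlink : ∀ e, a ≤ e → e < b → z e = z (e + 1))
    (hab : a ≤ b) : z a = z b := by
  induction b, hab using Nat.le_induction with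
  | base => rfl
  | succ b hab ih =>
    exact (ih fun e h₁ h₂ => hlink e h₁ (by omega)).trans (hlink b hab (by omega))

lemma eq_zero_of_forall_links_of_sum_eq_zero {a b : ℕ}
    (hlink : ∀ e, a ≤ e → e < b → z e = z (e + 1)) (hab : a ≤ b)
    (hsum : ∑ s ∈ Icc a b, z s = 0) : z a = 0 := by
  rw [sum_congr rfl fun s hs => (eq_of_forall_links (fun e h₁ h₂ => hlink e h₁ (by
    simp only [mem_Icc] at hs; omega)) (mem_Icc.1 hs).1).symm, sum_const, nsmul_eq_mul] at hsum
  exact (mul_eq_zero.1 hsum).resolve_left (Nat.cast_ne_zero.2 (by rw [Nat.card_Icc]; omega))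

lemma eq_zero_of_links_off_one (hz₀ : z 0 = 0) (hzN : z N = 0) (r : ℕ)
    (hlink : ∀ e < N, e ≠ r → z e = z (e + 1)) : ∀ s ≤ N, z s = 0 := by
  intro s hs
  rcases le_or_gt s r with hsr | hsr
  · rw [← eq_of_forall_links (fun e _ he => hlink e (by omega) (by omega)) (Nat.zero_le s), hz₀]
  · rw [eq_of_forall_links (fun e he _ => hlink e (by omega) (by omega)) hs, hzN]

lemma eq_zero_of_links_off_two (hz₀ : z 0 = 0) (hzN : z N = 0) {r₁ r₂ : ℕ} (hr : r₁ < r₂)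
    (hr₂ : r₂ < N) (hlink : ∀ e < N, e ≠ r₁ → e ≠ r₂ → z e = z (e + 1)) {a b : ℕ}
    (hab : a ≤ b) (hbN : b ≤ N) (hsum : ∑ s ∈ Icc a b, z s = 0) (hmeet : a ≤ r₂ ∧ r₁ < b) :
    ∀ s ≤ N, z s = 0 := by
  have hprofile : ∀ s ≤ N, z s = if r₁ < s ∧ s ≤ r₂ then z r₂ else 0 := by
    intro s hs
    split_ifs with h
    · exact eq_of_forall_links (fun e h₁ h₂ => hlink e (by omega) (by omega) (by omega)) h.2
    · rcases le_or_gt s r₁ with hsr | hsr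
      · rw [← eq_of_forall_links (fun e _ he => hlink e (by omega) (by omega) (by omega))
          (Nat.zero_le s), hz₀]
      · rw [eq_of_forall_links (fun e he _ => hlink e (by omega) (by omega) (by omega)) hs, hzN]
  have hr₂0 : z r₂ = 0 := eq_zero_of_sum_eq_zero_of_eq_ite
    (fun s hs => hprofile s (by simp only [mem_Icc] at hs; omega)) hsum
    ⟨max a (r₁ + 1), by simp only [mem_Icc]; omega, by omega⟩
  intro s hs
  rw [hprofile s hs, hr₂0, ite_self]

end Links

/-- The conditions dual to the vectors `cvec n m l` below: `z 0` and `z (n + 1)` are the ground,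
`l = e + 2` is the link between `e` and `e + 1`, and `l = 0, 1` are the sums over the two
overlapping halves. -/
def Constraint (n m : ℕ) (z : ℕ → ℂ) : ℕ → Prop
  | 0 => ∑ s ∈ Icc m n, z s = 0
  | 1 => ∑ s ∈ Icc 1 m, z s = 0
  | e + 2 => z e = z (e + 1)

namespace Constraint

variable {n m : ℕ} {z : ℕ → ℂ}

lemma eq_zero_off_pair (hmn : m ≤ n) (hz₀ : z 0 = 0) (hzN : z (n + 1) = 0) {i j : ℕ}
    (h : ∀ l < n + 3, l ≠ i → l ≠ j → Constraint n m z l) : ∀ s ≤ n + 1, z s = 0 := by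
  by_cases hij : 2 ≤ i ∧ i < n + 3 ∧ 2 ≤ j ∧ j < n + 3 ∧ i ≠ j
  · wlog hlt : i < j generalizing i j
    · exact this (fun l hl h₁ h₂ => h l hl h₂ h₁) (by omega) (by omega)
    have hlink : ∀ e < n + 1, e ≠ i - 2 → e ≠ j - 2 → z e = z (e + 1) :=
      fun e he h₁ h₂ => h (e + 2) (by omega) (by omega) (by omega)
    by_cases him : i - 2 < m
    · exact eq_zero_of_links_off_two hz₀ hzN (by omega) (by omega) hlink (by omega) (by omega)
        (h 1 (by omega) (by omega) (by omega)) (by omega)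
    · exact eq_zero_of_links_off_two hz₀ hzN (by omega) (by omega) hlink (by omega) (by omega)
        (h 0 (by omega) (by omega) (by omega)) (by omega)
  · refine eq_zero_of_links_off_one hz₀ hzN (if 2 ≤ i ∧ i < n + 3 then i - 2 else j - 2)
      fun e he her => h (e + 2) (by omega) ?_ ?_ <;> split_ifs at her <;> omega

lemma eq_zero_off_zero_and_m (hm : 2 ≤ m) (hmn : m < n) (hz₀ : z 0 = 0)
    (hzN : z (n + 1) = 0) {i : ℕ} (h : ∀ l < n + 3, l ≠ i → l ≠ 0 → l ≠ m → Constraint n m z l) :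
    ∀ s ≤ n + 1, z s = 0 := by
  have hlink : ∀ e < n + 1, e + 2 ≠ i → e ≠ m - 2 → z e = z (e + 1) :=
    fun e he h₁ h₂ => h (e + 2) (by omega) h₁ (by omega) (by omega)
  by_cases hi : 2 ≤ i ∧ i < n + 3 ∧ i ≠ m
  · exact eq_zero_of_links_off_two hz₀ hzN (r₁ := min (i - 2) (m - 2))
      (r₂ := max (i - 2) (m - 2)) (by omega) (by omega)
      (fun e he h₁ h₂ => hlink e he (by omega) (by omega)) (by omega) (by omega)
      (h 1 (by omega) (by omega) (by omega) (by omega)) (by omega)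
  · exact eq_zero_of_links_off_one hz₀ hzN (m - 2) fun e he her => hlink e he (by omega) her

lemma eq_zero_off_one_and_m_add_three (hm : 2 ≤ m) (hmn : m < n) (hz₀ : z 0 = 0)
    (hzN : z (n + 1) = 0) {i : ℕ}
    (h : ∀ l < n + 3, l ≠ i → l ≠ 1 → l ≠ m + 3 → Constraint n m z l) :
    ∀ s ≤ n + 1, z s = 0 := by
  have hlink : ∀ e < n + 1, e + 2 ≠ i → e ≠ m + 1 → z e = z (e + 1) :=
    fun e he h₁ h₂ => h (e + 2) (by omega) h₁ (by omega) (by omega)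
  by_cases hi : 2 ≤ i ∧ i < n + 3 ∧ i ≠ m + 3
  · exact eq_zero_of_links_off_two hz₀ hzN (r₁ := min (i - 2) (m + 1))
      (r₂ := max (i - 2) (m + 1)) (by omega) (by omega)
      (fun e he h₁ h₂ => hlink e he (by omega) (by omega)) (by omega) (by omega)
      (h 0 (by omega) (by omega) (by omega) (by omega)) (by omega)
  · exact eq_zero_of_links_off_one hz₀ hzN (m + 1) fun e he her => hlink e he (by omega) her

lemma eq_zero_off_two_and_m_add_two (hm : 2 ≤ m) (hmn : m < n) (hz₀ : z 0 = 0)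
    (hzN : z (n + 1) = 0) {i : ℕ}
    (h : ∀ l < n + 3, l ≠ i → l ≠ 2 → l ≠ m + 2 → Constraint n m z l) :
    ∀ s ≤ n + 1, z s = 0 := by
  have hlink : ∀ e < n + 1, e + 2 ≠ i → e ≠ 0 → e ≠ m → z e = z (e + 1) :=
    fun e he h₁ h₂ h₃ => h (e + 2) (by omega) h₁ (by omega) (by omega)
  have hS₀ : i ≠ 0 → ∑ s ∈ Icc m n, z s = 0 := fun hi =>
    h 0 (by omega) hi.symm (by omega) (by omega)
  have hS₁ : i ≠ 1 → ∑ s ∈ Icc 1 m, z s = 0 := fun hi =>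
    h 1 (by omega) hi.symm (by omega) (by omega)
  by_cases hi : 3 ≤ i ∧ i < n + 3 ∧ i ≠ m + 2
  · rcases lt_or_gt_of_ne (show i - 2 ≠ m by omega) with him | him
    · -- `z` vanishes beyond `m`, so the sum over `[m, n]` is `z m`: the link at `m` holds
      have hright : ∀ s, m < s → s ≤ n + 1 → z s = 0 := fun s hs hsn =>
        (eq_of_forall_links (fun e h₁ h₂ => hlink e (by omega) (by omega) (by omega) (by omega))
          hsn).trans hzN
      have hzm : z m = 0 := by
        rw [← hS₀ (by omega), sum_eq_single_of_mem m (by simp only [mem_Icc]; omega)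
          fun s hs hsm => hright s (by simp only [mem_Icc] at hs; omega) (by
            simp only [mem_Icc] at hs; omega)]
      refine eq_zero_of_links_off_two hz₀ hzN (r₁ := 0) (r₂ := i - 2) (by omega) (by omega)
        (fun e he h₁ h₂ => ?_) (by omega) (by omega) (hS₁ (by omega)) (by omega)
      by_cases hem : e = m
      · rw [hem, hzm, hright (m + 1) (by omega) (by omega)]
      · exact hlink e he (by omega) h₁ hem
    · -- `z` is constant on `[1, m]`, so the sum over it gives the link at `0`
      have hz₁ : z 1 = 0 := eq_zero_of_forall_links_of_sum_eq_zero
        (fun e h₁ h₂ => hlink e (by omega) (by omega) (by omega) (by omega)) (by omega)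
        (hS₁ (by omega))
      refine eq_zero_of_links_off_two hz₀ hzN (r₁ := m) (r₂ := i - 2) (by omega) (by omega)
        (fun e he h₁ h₂ => ?_) (by omega) (by omega) (hS₀ (by omega)) (by omega)
      by_cases he0 : e = 0
      · rw [he0, hz₀, hz₁]
      · exact hlink e he (by omega) he0 h₁
  · have hlink' : ∀ e < n + 1, e ≠ 0 → e ≠ m → z e = z (e + 1) :=
      fun e he h₁ h₂ => hlink e he (by omega) h₁ h₂
    by_cases hi1 : i = 1
    · exact eq_zero_of_links_off_two hz₀ hzN (by omega) (by omega) hlink' (by omega) (by omega)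
        (hS₀ (by omega)) (by omega)
    · exact eq_zero_of_links_off_two hz₀ hzN (by omega) (by omega) hlink' (by omega) (by omega)
        (hS₁ hi1) (by omega)

lemma eq_zero_off_m_add_one_and_n_add_two (hm : 2 ≤ m) (hmn : m < n) (hz₀ : z 0 = 0)
    (hzN : z (n + 1) = 0) {i : ℕ}
    (h : ∀ l < n + 3, l ≠ i → l ≠ m + 1 → l ≠ n + 2 → Constraint n m z l) :
    ∀ s ≤ n + 1, z s = 0 := by
  have hlink : ∀ e < n + 1, e + 2 ≠ i → e ≠ m - 1 → e ≠ n → z e = z (e + 1) :=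
    fun e he h₁ h₂ h₃ => h (e + 2) (by omega) h₁ (by omega) (by omega)
  have hS₀ : i ≠ 0 → ∑ s ∈ Icc m n, z s = 0 := fun hi =>
    h 0 (by omega) hi.symm (by omega) (by omega)
  have hS₁ : i ≠ 1 → ∑ s ∈ Icc 1 m, z s = 0 := fun hi =>
    h 1 (by omega) hi.symm (by omega) (by omega)
  by_cases hi : 2 ≤ i ∧ i < n + 2 ∧ i ≠ m + 1
  · rcases lt_or_gt_of_ne (show i - 2 ≠ m - 1 by omega) with him | him
    · -- `z` is constant on `[m, n]`, so the sum over it gives the link at `n`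
      have hzm : z m = 0 := eq_zero_of_forall_links_of_sum_eq_zero
        (fun e h₁ h₂ => hlink e (by omega) (by omega) (by omega) (by omega)) hmn.le
        (hS₀ (by omega))
      have hzn : z n = 0 := by
        rw [← eq_of_forall_links (fun e h₁ h₂ => hlink e (by omega) (by omega) (by omega)
          (by omega)) hmn.le, hzm]
      refine eq_zero_of_links_off_two hz₀ hzN (r₁ := i - 2) (r₂ := m - 1) (by omega) (by omega)
        (fun e he h₁ h₂ => ?_) (by omega) (by omega) (hS₁ (by omega)) (by omega)
      by_cases hen : e = n
      · rw [hen, hzn, hzN]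
      · exact hlink e he (by omega) h₂ hen
    · -- `z` vanishes below `m`, so the sum over `[1, m]` is `z m`: the link at `m - 1` holds
      have hleft : ∀ s, s ≤ m - 1 → z s = 0 := fun s hs =>
        (eq_of_forall_links (fun e h₁ h₂ => hlink e (by omega) (by omega) (by omega) (by omega))
          (Nat.zero_le s)).symm.trans hz₀
      have hzm : z m = 0 := by
        rw [← hS₁ (by omega), sum_eq_single_of_mem m (by simp only [mem_Icc]; omega)
          fun s hs hsm => hleft s (by simp only [mem_Icc] at hs; omega)]
      refine eq_zero_of_links_off_two hz₀ hzN (r₁ := i - 2) (r₂ := n) (by omega) (by omega)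
        (fun e he h₁ h₂ => ?_) (by omega) (by omega) (hS₀ (by omega)) (by omega)
      by_cases hem : e = m - 1
      · rw [hem, hleft (m - 1) le_rfl, Nat.sub_add_cancel (by omega), hzm]
      · exact hlink e he (by omega) hem h₂
  · have hlink' : ∀ e < n + 1, e ≠ m - 1 → e ≠ n → z e = z (e + 1) :=
      fun e he h₁ h₂ => hlink e he (by omega) h₁ h₂
    by_cases hi0 : i = 0
    · exact eq_zero_of_links_off_two hz₀ hzN (by omega) (by omega) hlink' (by omega) (by omega)
        (hS₁ (by omega)) (by omega)
    · exact eq_zero_of_links_off_two hz₀ hzN (by omega) (by omega) hlink' hmn.le (by omega)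
        (hS₀ hi0) (by omega)

theorem eq_zero_off (hm : 2 ≤ m) (hmn : m < n) (hz₀ : z 0 = 0) (hzN : z (n + 1) = 0)
    {i q : ℕ} {T : Set ℕ}
    (hT : T ⊆ {q} ∨ T ⊆ {0, m} ∨ T ⊆ {1, m + 3} ∨ T ⊆ {2, m + 2} ∨ T ⊆ {m + 1, n + 2})
    (h : ∀ l < n + 3, l ≠ i → l ∉ T → Constraint n m z l) : ∀ s ≤ n + 1, z s = 0 := by
  rcases hT with hT | hT | hT | hT | hT
  · exact eq_zero_off_pair hmn.le hz₀ hzN fun l hl h₁ h₂ => h l hl h₁ fun hlT => h₂ (hT hlT)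
  · exact eq_zero_off_zero_and_m hm hmn hz₀ hzN fun l hl h₁ h₂ h₃ =>
      h l hl h₁ fun hlT => (hT hlT).elim h₂ h₃
  · exact eq_zero_off_one_and_m_add_three hm hmn hz₀ hzN fun l hl h₁ h₂ h₃ =>
      h l hl h₁ fun hlT => (hT hlT).elim h₂ h₃
  · exact eq_zero_off_two_and_m_add_two hm hmn hz₀ hzN fun l hl h₁ h₂ h₃ =>
      h l hl h₁ fun hlT => (hT hlT).elim h₂ h₃
  · exact eq_zero_off_m_add_one_and_n_add_two hm hmn hz₀ hzN fun l hl h₁ h₂ h₃ =>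
      h l hl h₁ fun hlT => (hT hlT).elim h₂ h₃

end Constraint

section CycleVectors

variable {n m : ℕ}

/-- The basis vector of coordinate `s - 1`, so that `s = 0` and `s = n + 1` give `0`. -/
noncomputable def extBasis (n s : ℕ) : EuclideanSpace ℂ (Fin n) :=
  if h : 1 ≤ s ∧ s ≤ n then EuclideanSpace.single ⟨s - 1, by omega⟩ 1 else 0

lemma extBasis_zero : extBasis n 0 = 0 := dif_neg (by omega)

lemma extBasis_of_lt {s : ℕ} (hs : n < s) : extBasis n s = 0 := dif_neg (by omega)

lemma inner_extBasis_extBasis (s t : ℕ) :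
    inner ℂ (extBasis n s) (extBasis n t) = if s = t ∧ 1 ≤ s ∧ s ≤ n then 1 else 0 := by
  unfold extBasis
  split_ifs <;>
    simp only [EuclideanSpace.inner_single_left, PiLp.single_apply, Fin.ext_iff, map_one, one_mul,
      inner_zero_left, inner_zero_right] <;>
    (try split_ifs) <;> first | rfl | omega

lemma eq_zero_of_forall_inner_extBasis {c : EuclideanSpace ℂ (Fin n)}
    (h : ∀ s, 1 ≤ s → s ≤ n → inner ℂ (extBasis n s) c = 0) : c = 0 := by
  ext t
  simpa [extBasis, EuclideanSpace.inner_single_left] using h (t + 1) (by omega) (by omega)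

noncomputable def cvec (n m : ℕ) : ℕ → EuclideanSpace ℂ (Fin n)
  | 0 => ∑ s ∈ Icc m n, extBasis n s
  | 1 => ∑ s ∈ Icc 1 m, extBasis n s
  | e + 2 => extBasis n e - extBasis n (e + 1)

lemma inner_cvec_eq_zero_iff (c : EuclideanSpace ℂ (Fin n)) (l : ℕ) :
    inner ℂ (cvec n m l) c = 0 ↔ Constraint n m (fun s => inner ℂ (extBasis n s) c) l := by
  match l with
  | 0 => simp [cvec, Constraint]
  | 1 => simp [cvec, Constraint]
  | e + 2 => simp [cvec, Constraint, sub_eq_zero]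

lemma inner_extBasis_cvec_zero (hm : 1 ≤ m) (s : ℕ) :
    inner ℂ (extBasis n s) (cvec n m 0) = if m ≤ s ∧ s ≤ n then 1 else 0 := by
  simp only [cvec, inner_sum, inner_extBasis_extBasis, ite_and, sum_ite_eq, mem_Icc]
  split_ifs <;> first | rfl | omega

lemma inner_extBasis_cvec_one (hmn : m ≤ n) (s : ℕ) :
    inner ℂ (extBasis n s) (cvec n m 1) = if 1 ≤ s ∧ s ≤ m then 1 else 0 := by
  simp only [cvec, inner_sum, inner_extBasis_extBasis, ite_and, sum_ite_eq, mem_Icc]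
  split_ifs <;> first | rfl | omega

lemma inner_extBasis_cvec_add_two (s e : ℕ) :
    inner ℂ (extBasis n s) (cvec n m (e + 2)) =
      (if s = e ∧ 1 ≤ s ∧ s ≤ n then 1 else 0) -
        if s = e + 1 ∧ 1 ≤ s ∧ s ≤ n then 1 else 0 := by
  simp only [cvec, inner_sub_right, inner_extBasis_extBasis]

lemma inner_cvec_cvec_eq_zero (hm : 1 ≤ m) (hmn : m < n) {i j : ℕ} (hij : i < j)
    (hj : j < n + 3) (hadj : j ≠ i + 1) (h₀ : i = 0 → j ≠ m + 1 ∧ j ≠ n + 2)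
    (h₁ : i = 1 → j ≠ m + 2) :
    inner ℂ (cvec n m i) (cvec n m j) = 0 := by
  obtain ⟨e, rfl⟩ : ∃ e, j = e + 2 := ⟨j - 2, by omega⟩
  rcases i with _ | _ | i
  · rw [inner_eq_zero_symm, inner_cvec_eq_zero_iff]
    simp only [Constraint, inner_extBasis_cvec_zero hm]
    split_ifs <;> first | rfl | omega
  · rw [inner_eq_zero_symm, inner_cvec_eq_zero_iff]
    simp only [Constraint, inner_extBasis_cvec_one hmn.le]
    split_ifs <;> first | rfl | omega
  · rw [inner_cvec_eq_zero_iff]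
    simp only [Constraint, inner_extBasis_cvec_add_two]
    split_ifs <;> first | rfl | omega

lemma cvec_ne_zero (hm : 1 ≤ m) (hmn : m < n) {l : ℕ} (hl : l < n + 3) : cvec n m l ≠ 0 := by
  intro h
  have key : ∀ s, inner ℂ (extBasis n s) (cvec n m l) = 0 := fun s => by
    rw [h, inner_zero_right]
  rcases l with _ | _ | e
  · simpa [inner_extBasis_cvec_zero hm, hmn.le] using key m
  · simpa [inner_extBasis_cvec_one hmn.le, hm] using key 1
  · have h' := key (if e < n then e + 1 else e)
    rw [inner_extBasis_cvec_add_two] at h'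
    split_ifs at h' <;> first | omega | norm_num at h'

theorem eq_zero_of_inner_cvec_eq_zero (hm : 2 ≤ m) (hmn : m < n)
    {c : EuclideanSpace ℂ (Fin n)} {i q : ℕ} {T : Set ℕ}
    (hT : T ⊆ {q} ∨ T ⊆ {0, m} ∨ T ⊆ {1, m + 3} ∨ T ⊆ {2, m + 2} ∨ T ⊆ {m + 1, n + 2})
    (h : ∀ l < n + 3, l ≠ i → l ∉ T → inner ℂ (cvec n m l) c = 0) : c = 0 :=
  eq_zero_of_forall_inner_extBasis fun s _ hs =>
    Constraint.eq_zero_off hm hmn (by rw [extBasis_zero, inner_zero_left])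
      (by rw [extBasis_of_lt (by omega), inner_zero_left]) hT
      (fun l hl h₁ h₂ => (inner_cvec_eq_zero_iff c l).1 (h l hl h₁ h₂)) s (by omega)

end CycleVectors

def labelA (i : ℕ) : Bool × ℕ := (i % 2 = 0, i / 2)

lemma labelA_injective : Function.Injective labelA := by
  intro i j h
  simp only [labelA, Prod.ext_iff, decide_eq_decide] at h
  omega

lemma labelA_succ {i : ℕ} (hi : i % 2 = 0) :
    labelA (i + 1) = (!(labelA i).1, (labelA i).2) := by
  simp only [labelA, Prod.ext_iff, ← decide_not, decide_eq_decide]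
  omega

/-- Generically `labelA` shifted by one; the chords `{0, 2k+2}` and `{1, 2k+3}` force the
exceptions. -/
def labelB (k i : ℕ) : Bool × ℕ :=
  if i = 0 ∨ i = 4 * k + 3 then (i = 0, k + 1)
  else if i = 2 * k + 3 ∨ i = 2 * k + 4 then (i = 2 * k + 4, 1)
  else (i % 2 = 1, (i + 1) / 2)

lemma labelB_flip {k i j : ℕ} (hj : j < 4 * k + 4)
    (h : j = i + 1 ∧ i % 2 = 1 ∨ i = 0 ∧ (j = 2 * k + 2 ∨ j = 4 * k + 3) ∨
      i = 1 ∧ j = 2 * k + 3) :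
    labelB k j = (!(labelB k i).1, (labelB k i).2) := by
  unfold labelB
  split_ifs <;> simp only [Prod.ext_iff, ← decide_not, decide_eq_decide, and_true] <;> omega

lemma labelB_eq_labelB {k l q : ℕ} (hl : l < 4 * k + 4) (hq : q < 4 * k + 4)
    (h : labelB k l = labelB k q) :
    l = q ∨ (l = 0 ∨ l = 2 * k + 1) ∧ (q = 0 ∨ q = 2 * k + 1) ∨
      (l = 1 ∨ l = 2 * k + 4) ∧ (q = 1 ∨ q = 2 * k + 4) ∨
      (l = 2 ∨ l = 2 * k + 3) ∧ (q = 2 ∨ q = 2 * k + 3) ∨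
      (l = 2 * k + 2 ∨ l = 4 * k + 3) ∧ (q = 2 * k + 2 ∨ q = 4 * k + 3) := by
  unfold labelB at h
  split_ifs at h <;> simp only [Prod.ext_iff, decide_eq_decide] at h <;> omega

lemma exists_subset_of_labelB_eq {k : ℕ} (hk : 1 ≤ k) {T : Set ℕ}
    (hT : ∀ l ∈ T, l < 4 * k + 4) (hlabel : ∀ l ∈ T, ∀ l' ∈ T, labelB k l = labelB k l') :
    ∃ q, T ⊆ {q} ∨ T ⊆ {0, 2 * k + 1} ∨ T ⊆ {1, 2 * k + 4} ∨ T ⊆ {2, 2 * k + 3} ∨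
      T ⊆ {2 * k + 2, 4 * k + 3} := by
  rcases T.eq_empty_or_nonempty with rfl | ⟨q, hq⟩
  · exact ⟨0, Or.inl (Set.empty_subset _)⟩
  have h := fun l (hl : l ∈ T) => labelB_eq_labelB (hT l hl) (hT q hq) (hlabel l hl q hq)
  refine ⟨q, ?_⟩
  simp only [Set.subset_def, Set.mem_insert_iff, Set.mem_singleton_iff]
  by_cases h₁ : q = 0 ∨ q = 2 * k + 1
  · exact Or.inr (Or.inl fun l hl => by have := h l hl; omega)
  by_cases h₂ : q = 1 ∨ q = 2 * k + 4
  · exact Or.inr (Or.inr (Or.inl fun l hl => by have := h l hl; omega))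
  by_cases h₃ : q = 2 ∨ q = 2 * k + 3
  · exact Or.inr (Or.inr (Or.inr (Or.inl fun l hl => by have := h l hl; omega)))
  by_cases h₄ : q = 2 * k + 2 ∨ q = 4 * k + 3
  · exact Or.inr (Or.inr (Or.inr (Or.inr fun l hl => by have := h l hl; omega)))
  · exact Or.inl fun l hl => by have := h l hl; omega

noncomputable def upbFactors (k i : ℕ) :
    ∀ j : Fin 3, EuclideanSpace ℂ (Fin (![2, 2, 4 * k + 1] j))
  | 0 => qubit (labelA i)
  | 1 => qubit (labelB k i)
  | 2 => cvec (4 * k + 1) (2 * k + 1) i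

lemma inner_prodVec_upbFactors (k i : ℕ)
    (g : ∀ j : Fin 3, EuclideanSpace ℂ (Fin (![2, 2, 4 * k + 1] j))) :
    inner ℂ (prodVec (upbFactors k i)) (prodVec g) =
      inner ℂ (qubit (labelA i)) (g 0) * inner ℂ (qubit (labelB k i)) (g 1) *
        inner ℂ (cvec (4 * k + 1) (2 * k + 1) i) (g 2) := by
  rw [inner_prodVec, Fin.prod_univ_three]
  rfl

lemma upbFactors_ne_zero {k : ℕ} (hk : 1 ≤ k) (i : Fin (4 * k + 4)) (j : Fin 3) :
    upbFactors k i j ≠ 0 := by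
  fin_cases j
  · exact qubit_ne_zero _
  · exact qubit_ne_zero _
  · exact cvec_ne_zero (by omega) (by omega) i.2

lemma inner_prodVec_upbFactors_eq_zero {k i j : ℕ} (hij : i < j) (hj : j < 4 * k + 4) :
    inner ℂ (prodVec (upbFactors k i)) (prodVec (upbFactors k j)) = 0 := by
  rw [inner_prodVec_upbFactors]
  simp only [upbFactors]
  by_cases hA : j = i + 1 ∧ i % 2 = 0
  · rw [hA.1, labelA_succ hA.2, inner_qubit_flip, zero_mul, zero_mul]
  by_cases hB : j = i + 1 ∧ i % 2 = 1 ∨ i = 0 ∧ (j = 2 * k + 2 ∨ j = 4 * k + 3) ∨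
      i = 1 ∧ j = 2 * k + 3
  · rw [labelB_flip hj hB, inner_qubit_flip, mul_zero, zero_mul]
  · rw [inner_cvec_cvec_eq_zero (by omega) (by omega) hij (by omega) (by omega) (by omega)
      (by omega), mul_zero]

lemma exists_inner_prodVec_upbFactors_ne_zero {k : ℕ} (hk : 1 ≤ k)
    (g : ∀ j : Fin 3, EuclideanSpace ℂ (Fin (![2, 2, 4 * k + 1] j))) (hg : ∀ j, g j ≠ 0) :
    ∃ i : Fin (4 * k + 4), inner ℂ (prodVec (upbFactors k i)) (prodVec g) ≠ 0 := by
  by_contra! h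
  obtain ⟨i, hi⟩ := exists_forall_eq_of_inner_qubit_eq_zero labelA_injective (hg 0)
  obtain ⟨q, hT⟩ := exists_subset_of_labelB_eq hk
    (T := {l | l < 4 * k + 4 ∧ inner ℂ (qubit (labelB k l)) (g 1) = 0}) (fun l hl => hl.1)
    (fun l hl l' hl' => eq_of_inner_qubit_eq_zero (hg 1) hl.2 hl'.2)
  refine hg 2 (eq_zero_of_inner_cvec_eq_zero (n := 4 * k + 1) (m := 2 * k + 1) (i := i) (by omega)
    (by omega) hT fun l hl hli hlT => ?_)
  have hprod := h ⟨l, hl⟩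
  rw [inner_prodVec_upbFactors] at hprod
  rcases mul_eq_zero.1 hprod with hAB | hC
  · rcases mul_eq_zero.1 hAB with hA | hB
    · exact absurd (hi l hA) hli
    · exact absurd ⟨hl, hB⟩ hlT
  · exact hC

theorem stmt18 (k : ℕ) (hk : 1 ≤ k) :
    ∃ S : Finset (EuclideanSpace ℂ (∀ j : Fin 3, Fin (![2, 2, 4 * k + 1] j))),
      IsUPB S ∧ S.card = 4 * k + 4 := by
  have horth : Pairwise fun i j : Fin (4 * k + 4) =>
      inner ℂ (prodVec (upbFactors k i)) (prodVec (upbFactors k j)) = 0 := by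
    intro i j hij
    rcases lt_or_gt_of_ne (Fin.val_injective.ne hij) with h | h
    · exact inner_prodVec_upbFactors_eq_zero h j.2
    · exact inner_eq_zero_symm.1 (inner_prodVec_upbFactors_eq_zero h i.2)
  obtain ⟨hS, hcard⟩ := isUPB_image_prodVec (fun i : Fin (4 * k + 4) => upbFactors k i)
    (upbFactors_ne_zero hk) horth (exists_inner_prodVec_upbFactors_ne_zero hk)
  exact ⟨_, hS, by rw [hcard, Fintype.card_fin]⟩
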